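/- Perpetual Phragmén with lexicographic tie-breaking satisfies OIIA: removing a non-winning alternative from any voter's current-round approval set does not change the current-round winner. -/

import Mathlib

open scoped Classical

noncomputable section

/-- A one-round approval profile: each of the `n` voters approves a finite set of
alternatives (alternatives are natural numbers). -/
abbrev Profile (n : ℕ) := Fin n → Finset ℕ

/-- An online temporal voting rule: given the round index `t` and the (infinite
sequence of) approval profiles, it returns the winning alternative of round `t`.
Online rules only look at rounds `0,…,t`. -/
abbrev VRule (n : ℕ) := ℕ → (ℕ → Profile n) → ℕ

/-- Replace voter `i`'s approval set in round `t` by `S`, keeping everything else. -/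
def updateRound {n : ℕ} (A : ℕ → Profile n) (t : ℕ) (i : Fin n) (S : Finset ℕ) :
    ℕ → Profile n :=
  fun s => if s = t then Function.update (A s) i S else A s

/-- A rule is online if the round-`t` winner only depends on rounds `0,…,t`. -/
def OnlineRule {n : ℕ} (R : VRule n) : Prop :=
  ∀ (t : ℕ) (A B : ℕ → Profile n), (∀ s, s ≤ t → A s = B s) → R t A = R t B

/-- Monotonicity: if `c` wins round `t`, adding `c` to any voter's round-`t`
approval set keeps `c` the round-`t` winner. -/
def IsMonotone {n : ℕ} (R : VRule n) : Prop :=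
  ∀ (A : ℕ → Profile n) (t : ℕ) (i : Fin n),
    R t (updateRound A t i (A t i ∪ {R t A})) = R t A

/-- Online independence of irrelevant alternatives: removing a non-winning
alternative `d` from any single voter's round-`t` approvals keeps the winner. -/
def OIIA {n : ℕ} (R : VRule n) : Prop :=
  ∀ (A : ℕ → Profile n) (t : ℕ) (i : Fin n) (d : ℕ), d ≠ R t A →
    R t (updateRound A t i ((A t i).erase d)) = R t A

/-- Online strategyproofness: fixing previous rounds and the other voters, no
misreport `S` by voter `i` in round `t` can turn the round-`t` winner from a
(truthfully) unapproved alternative into an approved one. -/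
def OSP {n : ℕ} (R : VRule n) : Prop :=
  ∀ (A : ℕ → Profile n) (t : ℕ) (i : Fin n) (S : Finset ℕ),
    R t (updateRound A t i S) ∈ A t i → R t A ∈ A t i

/-- `B` deviates from `A` only in voter `i`'s reports. -/
def Deviation {n : ℕ} (i : Fin n) (A B : ℕ → Profile n) : Prop :=
  ∀ (t : ℕ) (j : Fin n), j ≠ i → B t j = A t j

/-- Satisfaction of the group `G` over rounds `0,…,T-1`: the number of rounds in
which the winner under the reported profile `B` is approved (in the reference,
e.g. truthful, profile `A`) by some member of `G`. -/
def satAgainst {n : ℕ} (R : VRule n) (B A : ℕ → Profile n) (T : ℕ)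
    (G : Finset (Fin n)) : ℕ :=
  ((Finset.range T).filter fun t => ∃ i ∈ G, R t B ∈ A t i).card

/-- (Full) strategyproofness: no unilateral misreport strictly increases a
voter's total satisfaction, measured against their truthful approvals. -/
def SP {n : ℕ} (R : VRule n) : Prop :=
  ∀ (A B : ℕ → Profile n) (i : Fin n) (T : ℕ), Deviation i A B →
    satAgainst R B A T {i} ≤ satAgainst R A A T {i}

/-- `G` is `ℓ`-cohesive in the first `T` rounds of `A`: in some `ℓ` rounds all
members of `G` approve a common alternative. -/
def Cohesive {n : ℕ} (A : ℕ → Profile n) (T : ℕ) (G : Finset (Fin n)) (ℓ : ℕ) : Prop :=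
  ∃ Rs : Finset ℕ, Rs ⊆ Finset.range T ∧ Rs.card = ℓ ∧
    ∀ t ∈ Rs, ∃ c, ∀ i ∈ G, c ∈ A t i

/-- Justified representation. -/
def SatisfiesJR {n : ℕ} (R : VRule n) : Prop :=
  ∀ (A : ℕ → Profile n) (T : ℕ) (G : Finset (Fin n)) (ℓ : ℕ),
    Cohesive A T G ℓ → min 1 (ℓ * G.card / n) ≤ satAgainst R A A T G

/-- Proportional justified representation. -/
def SatisfiesPJR {n : ℕ} (R : VRule n) : Prop :=
  ∀ (A : ℕ → Profile n) (T : ℕ) (G : Finset (Fin n)) (ℓ : ℕ),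
    Cohesive A T G ℓ → ℓ * G.card / n ≤ satAgainst R A A T G

end
noncomputable section

/-- Potential average load of group `S`: `(1 + Σ loads)/|S|`. -/
def ppPhi {n : ℕ} (lam : Fin n → ℝ) (S : Finset (Fin n)) : ℝ :=
  (1 + ∑ i ∈ S, lam i) / (S.card : ℝ)

/-- Encode a group of voters as a natural number (for lexicographic tie-breaking). -/
def ppEncode {n : ℕ} (S : Finset (Fin n)) : ℕ :=
  ∑ i ∈ S, 2 ^ (i : ℕ)

/-- The round-winning group of Perpetual Phragmén: among all nonempty groups with
a common approved alternative in `Ct`, one minimizing the potential average load,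
ties broken by the (injective) encoding. -/
def ppGroup {n : ℕ} (lam : Fin n → ℝ) (Ap : Profile n) (Ct : Finset ℕ) :
    Finset (Fin n) :=
  let cands : Finset (Finset (Fin n)) :=
    Finset.univ.filter fun S => S.Nonempty ∧ ∃ c ∈ Ct, ∀ i ∈ S, c ∈ Ap i
  let mins := cands.filter fun S => ∀ S' ∈ cands, ppPhi lam S ≤ ppPhi lam S'
  if h : mins.Nonempty then
    Finset.univ.filter fun i : Fin n =>
      ((mins.image ppEncode).min' (h.image _)).testBit (i : ℕ)
  else ∅

/-- The round winner: the lexicographically first common approved alternative of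
the winning group. -/
def ppWinner {n : ℕ} (lam : Fin n → ℝ) (Ap : Profile n) (Ct : Finset ℕ) : ℕ :=
  sInf {c : ℕ | c ∈ Ct ∧ ∀ i ∈ ppGroup lam Ap Ct, c ∈ Ap i}

/-- Voter loads at the start of round `t` under Perpetual Phragmén. -/
def ppLoad {n : ℕ} (C : ℕ → Finset ℕ) (A : ℕ → Profile n) : ℕ → Fin n → ℝ
  | 0 => fun _ => 0
  | t + 1 => fun i =>
      let lam := ppLoad C A t
      if i ∈ ppGroup lam (A t) (C t) then ppPhi lam (ppGroup lam (A t) (C t))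
      else lam i

/-- Perpetual Phragmén as an online voting rule. -/
def ppRule {n : ℕ} (C : ℕ → Finset ℕ) : VRule n :=
  fun t A => ppWinner (ppLoad C A t) (A t) (C t)

end

/-! Removing a non-winning alternative only shrinks the family of candidate groups, and the
winning group stays a candidate because its members still approve the winner. A load minimizer
of a family is still one of any subfamily containing it, and the minimizers of the subfamily are
then minimizers of the family; as ties are broken by an injective encoding, the same group is
selected, hence the same winner. The loads entering round `t` depend only on earlier rounds,
which are untouched. -/

open Finset

theorem Nat.testBit_sum_two_pow_iff (s : Finset ℕ) (k : ℕ) :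
    (∑ i ∈ s, 2 ^ i).testBit k ↔ k ∈ s := by
  conv_rhs => rw [← Finset.toFinset_bitIndices_sum_two_pow s]
  rw [List.mem_toFinset, Nat.mem_bitIndices]

theorem Nat.sInf_eq_of_subset {s t : Set ℕ} (hst : s ⊆ t) (h : t.Nonempty → sInf t ∈ s) :
    sInf s = sInf t := by
  rcases t.eq_empty_or_nonempty with rfl | ht
  · rw [Set.subset_empty_iff.1 hst]
  · exact le_antisymm (Nat.sInf_le (h ht)) (le_csInf ⟨_, h ht⟩ fun c hc => Nat.sInf_le (hst hc))

section PerpetualPhragmen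

variable {n : ℕ}

theorem ppEncode_testBit_iff (S : Finset (Fin n)) (i : Fin n) :
    (ppEncode S).testBit i ↔ i ∈ S := by
  rw [ppEncode, ← Finset.sum_image (g := Fin.val) (fun _ _ _ _ h => Fin.val_injective h),
    Nat.testBit_sum_two_pow_iff, Fin.val_injective.mem_finset_image]

theorem filter_testBit_ppEncode (S : Finset (Fin n)) :
    univ.filter (fun i : Fin n => (ppEncode S).testBit i) = S := by
  ext i
  simp [ppEncode_testBit_iff]

theorem ppEncode_injective : Function.Injective (ppEncode (n := n)) := fun S T h => by
  rw [← filter_testBit_ppEncode S, h, filter_testBit_ppEncode]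

def ppCands (Ap : Profile n) (Ct : Finset ℕ) : Finset (Finset (Fin n)) :=
  univ.filter fun S => S.Nonempty ∧ ∃ c ∈ Ct, ∀ i ∈ S, c ∈ Ap i

noncomputable def ppMins (lam : Fin n → ℝ) (cands : Finset (Finset (Fin n))) :
    Finset (Finset (Fin n)) :=
  cands.filter fun S => ∀ S' ∈ cands, ppPhi lam S ≤ ppPhi lam S'

noncomputable def ppSelect (lam : Fin n → ℝ) (cands : Finset (Finset (Fin n))) :
    Finset (Fin n) :=
  if h : (ppMins lam cands).Nonempty then
    univ.filter fun i : Fin n =>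
      (((ppMins lam cands).image ppEncode).min' (h.image _)).testBit i
  else ∅

theorem ppGroup_eq_ppSelect (lam : Fin n → ℝ) (Ap : Profile n) (Ct : Finset ℕ) :
    ppGroup lam Ap Ct = ppSelect lam (ppCands Ap Ct) := rfl

section Select

variable (lam : Fin n → ℝ) {cands cands' : Finset (Finset (Fin n))}

theorem ppMins_nonempty (h : cands.Nonempty) : (ppMins lam cands).Nonempty := by
  obtain ⟨S, hS, hmin⟩ := exists_min_image cands (ppPhi lam) h
  exact ⟨S, mem_filter.2 ⟨hS, hmin⟩⟩

theorem ppSelect_mem_ppMins (h : cands.Nonempty) :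
    ppSelect lam cands ∈ ppMins lam cands := by
  have hne := ppMins_nonempty lam h
  obtain ⟨S, hS, hSenc⟩ := mem_image.1 (min'_mem _ (hne.image ppEncode))
  rw [ppSelect, dif_pos hne, ← hSenc, filter_testBit_ppEncode]
  exact hS

theorem ppEncode_ppSelect_le (S : Finset (Fin n)) (hS : S ∈ ppMins lam cands) :
    ppEncode (ppSelect lam cands) ≤ ppEncode S := by
  have hne : (ppMins lam cands).Nonempty := ⟨S, hS⟩
  obtain ⟨T, -, hTenc⟩ := mem_image.1 (min'_mem _ (hne.image ppEncode))
  rw [ppSelect, dif_pos hne, ← hTenc, filter_testBit_ppEncode, hTenc]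
  exact min'_le _ _ (mem_image_of_mem _ hS)

theorem ppSelect_eq_of_subset (hsub : cands' ⊆ cands) (hG : ppSelect lam cands ∈ cands') :
    ppSelect lam cands' = ppSelect lam cands := by
  set G := ppSelect lam cands
  have hGmin : G ∈ ppMins lam cands := ppSelect_mem_ppMins lam ⟨G, hsub hG⟩
  have hGphi : ∀ S ∈ cands, ppPhi lam G ≤ ppPhi lam S := (mem_filter.1 hGmin).2
  have hGmin' : G ∈ ppMins lam cands' :=
    mem_filter.2 ⟨hG, fun S hS => hGphi S (hsub hS)⟩
  have hmins : ppMins lam cands' ⊆ ppMins lam cands := fun S hS =>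
    mem_filter.2 ⟨hsub (mem_filter.1 hS).1,
      fun S' hS' => ((mem_filter.1 hS).2 G hG).trans (hGphi S' hS')⟩
  have hG'min : ppSelect lam cands' ∈ ppMins lam cands' := ppSelect_mem_ppMins lam ⟨G, hG⟩
  exact ppEncode_injective <| le_antisymm (ppEncode_ppSelect_le lam G hGmin')
    (ppEncode_ppSelect_le lam _ (hmins hG'min))

end Select

section Round

variable (lam : Fin n → ℝ) {Ap Ap' : Profile n} {Ct : Finset ℕ}

theorem ppCands_mono (hsub : ∀ j, Ap' j ⊆ Ap j) : ppCands Ap' Ct ⊆ ppCands Ap Ct := by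
  intro S hS
  obtain ⟨-, hSne, c, hc, hcS⟩ := mem_filter.1 hS
  exact mem_filter.2 ⟨mem_univ _, hSne, c, hc, fun j hj => hsub j (hcS j hj)⟩

theorem ppGroup_mem_ppCands (h : (ppCands Ap Ct).Nonempty) :
    ppGroup lam Ap Ct ∈ ppCands Ap Ct :=
  mem_of_mem_filter _ (ppSelect_mem_ppMins lam h)

theorem ppCands_nonempty_of_mem_ppGroup {j : Fin n} (hj : j ∈ ppGroup lam Ap Ct) :
    (ppCands Ap Ct).Nonempty := by
  by_contra hempty
  rw [ppGroup_eq_ppSelect, not_nonempty_iff_eq_empty.1 hempty] at hj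
  simp [ppSelect, ppMins] at hj

theorem ppWinner_mem (h : (ppCands Ap Ct).Nonempty) :
    ppWinner lam Ap Ct ∈ Ct ∧ ∀ j ∈ ppGroup lam Ap Ct, ppWinner lam Ap Ct ∈ Ap j := by
  obtain ⟨-, -, c, hc⟩ := mem_filter.1 (ppGroup_mem_ppCands lam h)
  exact Nat.sInf_mem (s := {c | c ∈ Ct ∧ ∀ i ∈ ppGroup lam Ap Ct, c ∈ Ap i}) ⟨c, hc⟩

theorem ppGroup_eq_of_subset (hsub : ∀ j, Ap' j ⊆ Ap j)
    (hw : ∀ j ∈ ppGroup lam Ap Ct, ppWinner lam Ap Ct ∈ Ap' j) :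
    ppGroup lam Ap' Ct = ppGroup lam Ap Ct := by
  rcases (ppCands Ap Ct).eq_empty_or_nonempty with hempty | hne
  · have hempty' : ppCands Ap' Ct = ∅ := subset_empty.1 (hempty ▸ ppCands_mono hsub)
    rw [ppGroup_eq_ppSelect, ppGroup_eq_ppSelect, hempty, hempty']
  · have hG : ppGroup lam Ap Ct ∈ ppCands Ap' Ct := by
      have hGne := (mem_filter.1 (ppGroup_mem_ppCands lam hne)).2.1
      exact mem_filter.2 ⟨mem_univ _, hGne, _, (ppWinner_mem lam hne).1, hw⟩
    exact ppSelect_eq_of_subset lam (ppCands_mono hsub) hG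

theorem ppWinner_eq_of_subset (hsub : ∀ j, Ap' j ⊆ Ap j)
    (hw : ∀ j ∈ ppGroup lam Ap Ct, ppWinner lam Ap Ct ∈ Ap' j) :
    ppWinner lam Ap' Ct = ppWinner lam Ap Ct := by
  have hG := ppGroup_eq_of_subset lam hsub hw
  unfold ppWinner at hw ⊢
  rw [hG]
  exact Nat.sInf_eq_of_subset (fun c hc => ⟨hc.1, fun j hj => hsub j (hc.2 j hj)⟩)
    fun hne => ⟨(Nat.sInf_mem hne).1, hw⟩

theorem ppWinner_update_erase (i : Fin n) {d : ℕ} (hd : d ≠ ppWinner lam Ap Ct) :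
    ppWinner lam (Function.update Ap i ((Ap i).erase d)) Ct = ppWinner lam Ap Ct := by
  refine ppWinner_eq_of_subset lam (fun j => ?_) fun j hj => ?_
  · rcases eq_or_ne j i with rfl | hji
    · simpa using erase_subset d (Ap j)
    · simp [hji]
  · have hwj := (ppWinner_mem lam (ppCands_nonempty_of_mem_ppGroup lam hj)).2 j hj
    rcases eq_or_ne j i with rfl | hji
    · simpa using ⟨hd.symm, hwj⟩
    · simpa [hji] using hwj

end Round

theorem ppLoad_congr (C : ℕ → Finset ℕ) {A B : ℕ → Profile n} :
    ∀ t, (∀ s < t, A s = B s) → ppLoad C A t = ppLoad C B t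
  | 0, _ => rfl
  | t + 1, h => by
    simp only [ppLoad, ppLoad_congr C t fun s hs => h s (hs.trans t.lt_succ_self),
      h t t.lt_succ_self]

end PerpetualPhragmen

/-- Perpetual Phragmén with lexicographic tie-breaking satisfies
OIIA. -/
theorem perpetualPhragmen_oiia {n : ℕ} (C : ℕ → Finset ℕ) :
    OIIA (ppRule (n := n) C) := by
  intro A t i d hd
  have hload : ppLoad C (updateRound A t i ((A t i).erase d)) t = ppLoad C A t :=
    ppLoad_congr C t fun s hs => by simp [updateRound, hs.ne]
  have hround : updateRound A t i ((A t i).erase d) t =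
      Function.update (A t) i ((A t i).erase d) := if_pos rfl
  change ppWinner _ _ (C t) = ppWinner _ _ (C t)
  rw [hload, hround]
  exact ppWinner_update_erase _ i hd
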